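/- arXiv:1904.01469 — 2 statements merged into one kernel-verified Lean document; each statement's English description precedes it below -/
import Mathlib

section
/- Affine (parallel) Desargues theorem in a coordinate plane: let K be a division ring, V a module over K, and P an affine space (AddTorsor) over V. Let u : V with u ≠ 0, let A, B, C : P, and let a, b, c : K with A' = a • u +ᵥ A, B' = b • u +ᵥ B, C' = c • u +ᵥ C (so the lines AA', BB', CC' all lie in the parallel direction u). Assume B -ᵥ A ∉ Submodule.span K {u} and C -ᵥ B ∉ Submodule.span K {u} (the lines AB and BC are not in the direction u). If there exist λ, μ : K with B' -ᵥ A' = λ • (B -ᵥ A) and C' -ᵥ B' = μ • (C -ᵥ B) (i.e., AB ∥ A'B' and BC ∥ B'C'), then C' -ᵥ A' = C -ᵥ A; in particular the line through A and C is parallel to the line through A' and C'. -/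
lemma aux_eq {K V : Type*} [DivisionRing K] [AddCommGroup V] [Module K V]
    (u w : V) (hu : u ≠ 0) (t : K) (hw : w ∉ Submodule.span K {u})
    (h : ∃ l : K, t • u + w = l • w) : t = 0 := by
  obtain ⟨l, hl⟩ := h
  have h2 : t • u = (l - 1) • w := by
    rw [sub_smul, one_smul, ← hl]; abel
  by_cases hl1 : l = 1
  · subst hl1
    simp only [sub_self, zero_smul] at h2
    rcases smul_eq_zero.mp h2 with h | h
    · exact h
    · exact absurd h hu
  · exfalso
    apply hw
    have : w = (l - 1)⁻¹ • t • u := by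
      rw [h2, inv_smul_smul₀ (sub_ne_zero.mpr hl1)]
    rw [this, smul_smul]
    exact Submodule.smul_mem _ _ (Submodule.mem_span_singleton_self u)

theorem affine_parallel_desargues
    {K V P : Type*} [DivisionRing K] [AddCommGroup V] [Module K V] [AddTorsor V P]
    (u : V) (hu : u ≠ 0) (A B C A' B' C' : P) (a b c : K)
    (hA' : A' = a • u +ᵥ A) (hB' : B' = b • u +ᵥ B) (hC' : C' = c • u +ᵥ C)
    (hAB : B -ᵥ A ∉ Submodule.span K {u}) (hBC : C -ᵥ B ∉ Submodule.span K {u})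
    (hAB' : ∃ l : K, B' -ᵥ A' = l • (B -ᵥ A))
    (hBC' : ∃ m : K, C' -ᵥ B' = m • (C -ᵥ B)) :
    C' -ᵥ A' = C -ᵥ A := by
  subst hA' hB' hC'
  have key : ∀ (p q : P) (s t : K), (t • u +ᵥ q) -ᵥ (s • u +ᵥ p) = (t - s) • u + (q -ᵥ p) := by
    intro p q s t
    rw [vadd_vsub_assoc, vsub_vadd_eq_vsub_sub, sub_smul]
    abel
  rw [key] at hAB' hBC' ⊢
  have hba : b - a = 0 := aux_eq u _ hu _ hAB hAB'
  have hcb : c - b = 0 := aux_eq u _ hu _ hBC hBC'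
  rw [sub_eq_zero.mp hcb, hba, zero_smul, zero_add]
end

section
/- Affine (parallel) Pappus theorem over a finite division ring: let K be a finite division ring, V a module over K, and P an affine space (AddTorsor) over V. Let O : P and let u, w : V be linearly independent over K. Let α, β, γ, α', β', γ' : K be nonzero and set A = α • u +ᵥ O, B = β • u +ᵥ O, C = γ • u +ᵥ O (on the line through O with direction u) and A' = α' • w +ᵥ O, B' = β' • w +ᵥ O, C' = γ' • w +ᵥ O (on the line through O with direction w). If there exist λ, μ : K with B' -ᵥ A = λ • (B -ᵥ A') and C' -ᵥ B = μ • (C -ᵥ B') (i.e., AB' ∥ A'B and BC' ∥ B'C), then there exists ν : K with C' -ᵥ A = ν • (C -ᵥ A') (i.e., AC' ∥ A'C). Thus every finite Desarguesian coordinate plane is Pappian. -/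
theorem affine_parallel_pappus_finite
    {K V P : Type*} [DivisionRing K] [Finite K] [AddCommGroup V] [Module K V] [AddTorsor V P]
    (O : P) (u w : V) (huw : LinearIndependent K ![u, w])
    (α β γ α' β' γ' : K) (hα : α ≠ 0) (hβ : β ≠ 0) (hγ : γ ≠ 0)
    (hα' : α' ≠ 0) (hβ' : β' ≠ 0) (hγ' : γ' ≠ 0)
    (A B C A' B' C' : P)
    (hA : A = α • u +ᵥ O) (hB : B = β • u +ᵥ O) (hC : C = γ • u +ᵥ O)
    (hA' : A' = α' • w +ᵥ O) (hB' : B' = β' • w +ᵥ O) (hC' : C' = γ' • w +ᵥ O)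
    (h1 : ∃ l : K, B' -ᵥ A = l • (B -ᵥ A'))
    (h2 : ∃ m : K, C' -ᵥ B = m • (C -ᵥ B')) :
    ∃ n : K, C' -ᵥ A = n • (C -ᵥ A') := by
  letI : Field K := littleWedderburn K
  obtain ⟨l, hl⟩ := h1
  obtain ⟨m, hm⟩ := h2
  subst hA hB hC hA' hB' hC'
  simp only [vadd_vsub_vadd_cancel_right] at hl hm ⊢
  have hpair := LinearIndependent.pair_iff.mp huw
  have e1 : (-α - l * β) • u + (β' + l * α') • w = 0 := by
    linear_combination (norm := module) hl
  have e2 : (-β - m * γ) • u + (γ' + m * β') • w = 0 := by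
    linear_combination (norm := module) hm
  obtain ⟨hs1, ht1⟩ := hpair _ _ e1
  obtain ⟨hs2, ht2⟩ := hpair _ _ e2
  have hα2 : α = l * m * γ := by linear_combination -hs1 + l * hs2
  have hγ2 : γ' = l * m * α' := by linear_combination ht2 - m * ht1
  refine ⟨-(l * m), ?_⟩
  rw [hα2, hγ2]
  module
end
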